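/- arXiv:1601.03012 — 4 statements merged into one kernel-verified Lean document; each statement's English description precedes it below -/
import Mathlib

section
/- For any constant 0 < c < 1, the series ∑_q q · c^{π(q)}, where q ranges over all primes and π(q) denotes the number of primes ≤ q, converges. -/
/-!
Chebyshev's lower bound `ψ n ≥ n log 2 - log (n + 1)` combined with `ψ n ≤ π n · log n` and
`log x ≤ 2 √x` gives `n log² 2 ≤ 8 (π n + 1)²`. Since `π` is injective on the primes, the series
is then dominated by a constant multiple of the convergent series `∑ k² c^k`.
-/

open Chebyshev

lemma Real.log_le_two_mul_sqrt {x : ℝ} (hx : 0 ≤ x) : log x ≤ 2 * √x := by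
  simpa [Real.sqrt_eq_rpow, div_eq_mul_inv, mul_comm] using Real.log_le_rpow_div hx one_half_pos

namespace Nat

lemma cast_mul_log_two_le_sqrt_mul_primeCounting (n : ℕ) :
    n * Real.log 2 ≤ 2 * √(n + 1) * (primeCounting n + 1) := by
  have hlog_n : Real.log n ≤ 2 * √(n + 1) :=
    (Real.log_le_two_mul_sqrt n.cast_nonneg).trans (by gcongr; linarith)
  have hlog_succ : Real.log (n + 1) ≤ 2 * √(n + 1) := Real.log_le_two_mul_sqrt (by positivity)
  calc (n : ℝ) * Real.log 2 ≤ primeCounting n * Real.log n + Real.log (n + 1) := by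
        linarith [psi_ge n, psi_le_primeCounting_mul_log n]
    _ ≤ primeCounting n * (2 * √(n + 1)) + 2 * √(n + 1) := by gcongr
    _ = 2 * √(n + 1) * (primeCounting n + 1) := by ring

lemma cast_mul_log_two_sq_le_primeCounting (n : ℕ) :
    n * Real.log 2 ^ 2 ≤ 8 * (primeCounting n + 1) ^ 2 := by
  rcases n.eq_zero_or_pos with rfl | hn
  · simp only [CharP.cast_eq_zero, zero_mul]
    positivity
  have hn' : (1 : ℝ) ≤ n := by exact_mod_cast hn
  have hsq : (n * Real.log 2) ^ 2 ≤ 4 * (n + 1) * (primeCounting n + 1) ^ 2 := by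
    calc ((n : ℝ) * Real.log 2) ^ 2 ≤ (2 * √(n + 1) * (primeCounting n + 1)) ^ 2 :=
          pow_le_pow_left₀ (by positivity) (cast_mul_log_two_le_sqrt_mul_primeCounting n) 2
      _ = 4 * ((n : ℝ) + 1) * (primeCounting n + 1) ^ 2 := by
          rw [mul_pow, mul_pow, Real.sq_sqrt (by positivity)]; ring
  nlinarith [sq_nonneg ((primeCounting n : ℝ) + 1)]

lemma Primes.primeCounting_injective : Function.Injective fun q : Primes => primeCounting q := by
  intro p q h
  have hp := count_succ Nat.Prime p
  have hq := count_succ Nat.Prime q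
  have h' : count Nat.Prime (p + 1) = count Nat.Prime (q + 1) := h
  simp only [p.2, q.2, if_true] at hp hq
  exact Primes.coe_nat_injective (count_injective p.2 q.2 (by omega))

end Nat

/-- For `0 < c < 1`, `∑_q q · c^{π(q)}` over primes `q` converges. -/
theorem stmt_1 (c : ℝ) (hc0 : 0 < c) (hc1 : c < 1) :
    Summable (fun q : Nat.Primes => (q : ℝ) * c ^ (Nat.primeCounting q)) := by
  have hgeom : Summable fun k : ℕ => (k : ℝ) ^ 2 * c ^ k :=
    summable_pow_mul_geometric_of_norm_lt_one 2 (by rwa [Real.norm_of_nonneg hc0.le])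
  have hinj : Function.Injective fun q : Nat.Primes => Nat.primeCounting q + 1 :=
    (add_left_injective 1).comp Nat.Primes.primeCounting_injective
  refine .of_nonneg_of_le (fun q => by positivity) (fun q => ?_)
    ((hgeom.comp_injective hinj).mul_left (8 / Real.log 2 ^ 2 / c))
  have hq : (q : ℝ) ≤ 8 * (Nat.primeCounting q + 1) ^ 2 / Real.log 2 ^ 2 := by
    rw [le_div_iff₀ (by positivity)]
    exact Nat.cast_mul_log_two_sq_le_primeCounting q
  calc (q : ℝ) * c ^ Nat.primeCounting q
      ≤ 8 * (Nat.primeCounting q + 1) ^ 2 / Real.log 2 ^ 2 * c ^ Nat.primeCounting q := by gcongr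
    _ = _ := by
      simp only [Function.comp_apply, Nat.cast_add, Nat.cast_one, pow_succ]
      field_simp
end

section
/- The sum ∑_q q²/(2(q+1)) · ∏_{p<q} (p+2)/(2(p+1)), where q ranges over primes and p over primes less than q, converges. -/
/-!
Writing each factor as `½ · (p + 2)/(p + 1)`, the product over the primes below `q` is
`2^(-π'(q))` times a product dominated by the telescoping `∏_{j<q} (j + 2)/(j + 1) = q + 1`, so
the `q`-th term is at most `q² / 2^π'(q)`. Chebyshev's lower bound
`π(n) ≥ (n log 2 - log (n + 1)) / log n` gives `2^π'(q) ≥ q⁴` for large `q`, so the terms are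
`O(1/q²)`.
-/

open Finset Filter Real
open scoped Nat.Prime

theorem prod_range_add_two_div_add_one (n : ℕ) :
    ∏ j ∈ range n, ((j : ℝ) + 2) / (j + 1) = n + 1 := by
  induction n with
  | zero => simp
  | succ n ih =>
    rw [prod_range_succ, ih]
    push_cast
    field_simp
    ring

theorem prod_add_two_div_add_one_le {s : Finset ℕ} {n : ℕ} (hs : s ⊆ range n) :
    ∏ j ∈ s, ((j : ℝ) + 2) / (j + 1) ≤ n + 1 := by
  have one_le (j : ℕ) : 1 ≤ ((j : ℝ) + 2) / (j + 1) := by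
    rw [one_le_div₀ (by positivity)]
    linarith
  calc ∏ j ∈ s, ((j : ℝ) + 2) / (j + 1)
      ≤ ∏ j ∈ range n, ((j : ℝ) + 2) / (j + 1) :=
        prod_le_prod_of_subset_of_one_le hs (fun j _ ↦ by positivity) fun j _ _ ↦ one_le j
    _ = n + 1 := prod_range_add_two_div_add_one n

theorem eventually_pow_le_two_pow_primeCounting (k : ℕ) :
    ∀ᶠ n : ℕ in atTop, ((n : ℝ) + 1) ^ k ≤ 2 ^ π n := by
  -- `(log n)² ≤ ε n` with this `ε` pays for the factor `log n` in Chebyshev's bound, for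
  -- `k log (n + 1) ≤ 2k log n`, and for the term `log (n + 1)` it subtracts.
  have hε : 0 < log 2 ^ 2 / (2 * k + 2) := by positivity
  have hlog_sq := ((isLittleO_pow_log_id_atTop (n := 2)).comp_tendsto
    tendsto_natCast_atTop_atTop).bound hε
  filter_upwards [hlog_sq, eventually_ge_atTop 2] with n hn h2
  set L := log n
  have hL_sq : (2 * k + 2) * L ^ 2 ≤ log 2 ^ 2 * n := by
    simp only [Function.comp_apply, id, norm_pow, norm_eq_abs, sq_abs] at hn
    rw [abs_of_nonneg (by positivity), div_mul_eq_mul_div, le_div_iff₀ (by positivity)] at hn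
    linarith
  have hn2 : (2 : ℝ) ≤ n := by exact_mod_cast h2
  have hlog2 : log 2 ≤ L := log_le_log (by norm_num) hn2
  have hlog2_pos : 0 < log 2 := log_pos (by norm_num)
  have hsucc : log (n + 1) ≤ 2 * L := by
    rw [← log_rpow (by positivity)]
    exact log_le_log (by positivity) (by norm_num; nlinarith)
  have hcheb : n * log 2 - log (n + 1) ≤ π n * L :=
    (div_le_iff₀ (by linarith)).mp (Chebyshev.pi_ge n)
  rw [← log_le_log_iff (by positivity) (by positivity), log_pow, log_pow]
  have hk : (k : ℝ) * log (n + 1) ≤ 2 * k * L := by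
    nlinarith [(Nat.cast_nonneg k : (0 : ℝ) ≤ k)]
  have key : k * log (n + 1) * L ≤ π n * log 2 * L := by
    nlinarith [mul_le_mul_of_nonneg_right hcheb hlog2_pos.le]
  exact le_of_mul_le_mul_right key (by linarith)

theorem eventually_pow_le_two_pow_primeCounting' (k : ℕ) :
    ∀ᶠ n : ℕ in atTop, (n : ℝ) ^ k ≤ 2 ^ π' n := by
  filter_upwards [(tendsto_sub_atTop_nat 1).eventually (eventually_pow_le_two_pow_primeCounting k),
    eventually_ge_atTop 1] with n hn h1
  rw [← Nat.primeCounting_sub_one]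
  rwa [← Nat.cast_add_one, Nat.sub_add_cancel h1] at hn

theorem prod_primesBelow_add_two_div_le (n : ℕ) :
    ∏ p ∈ n.primesBelow, ((p : ℝ) + 2) / (2 * (p + 1)) ≤ (n + 1) / 2 ^ π' n := by
  calc ∏ p ∈ n.primesBelow, ((p : ℝ) + 2) / (2 * (p + 1))
      = (∏ p ∈ n.primesBelow, ((p : ℝ) + 2) / (p + 1)) / 2 ^ π' n := by
        rw [← Nat.primesBelow_card_eq_primeCounting', ← prod_const, ← prod_div_distrib]
        refine prod_congr rfl fun p _ ↦ ?_
        rw [div_div, mul_comm]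
    _ ≤ (n + 1) / 2 ^ π' n := by
        gcongr
        exact prod_add_two_div_add_one_le (filter_subset _ _)

/-- `∑_q q²/(2(q+1)) · ∏_{p<q} (p+2)/(2(p+1))` over primes converges. -/
theorem stmt_8 :
    Summable (fun q : Nat.Primes =>
      ((q : ℝ) ^ 2 / (2 * ((q : ℝ) + 1))) *
        ∏ p ∈ Finset.filter Nat.Prime (Finset.range q), ((p : ℝ) + 2) / (2 * ((p : ℝ) + 1))) := by
  suffices Summable (fun n : ℕ => ((n : ℝ) ^ 2 / (2 * (n + 1))) *
      ∏ p ∈ n.primesBelow, ((p : ℝ) + 2) / (2 * (p + 1))) from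
    this.comp_injective Nat.Primes.coe_nat_injective
  refine .of_norm_bounded_eventually_nat (Real.summable_one_div_nat_pow.mpr one_lt_two) ?_
  filter_upwards [eventually_pow_le_two_pow_primeCounting' 4, eventually_gt_atTop 0]
    with n hn hn_pos
  have hn_pos : (0 : ℝ) < n := by exact_mod_cast hn_pos
  rw [norm_of_nonneg (by positivity)]
  calc (n : ℝ) ^ 2 / (2 * (n + 1)) * ∏ p ∈ n.primesBelow, ((p : ℝ) + 2) / (2 * (p + 1))
      ≤ (n : ℝ) ^ 2 / (2 * (n + 1)) * ((n + 1) / 2 ^ π' n) := by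
        gcongr
        exact prod_primesBelow_add_two_div_le n
    _ = (n : ℝ) ^ 2 / (2 * 2 ^ π' n) := by field_simp
    _ ≤ 1 / (n : ℝ) ^ 2 := by
        rw [div_le_div_iff₀ (by positivity) (by positivity)]
        nlinarith
end

section
/- Let c, f : Primes → ℝ with 0 < c < 1 constant value c(p) = c for all p and f(p) ≥ 0, f(p) ≤ 1/p for all primes p. Then ∑_q over primes of [q(1 − c + f(q))/(1 + f(q))]·∏_{p<q} [c/(1 + f(p))] converges, and moreover the total 'probability' ∑_q [(1 − c + f(q))/(1 + f(q))]·∏_{p<q} [c/(1 + f(p))] equals 1. -/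
/-!
Write `r p = c / (1 + f p) ≤ c` and `P q = ∏_{p < q} r p`. The weight of `q` is
`(1 - r q) P q = P q - P q⁺`, where `q⁺` is the next prime, so the partial sums telescope to
`1 - P q⁺`, and `P q ≤ c ^ π'(q) → 0`. For the first series, Chebyshev's lower bound
`π(n) ≫ n / log n` makes `c ^ π'(n)` decay faster than any power of `n`.
-/

open Finset Filter Topology
open Nat (primesBelow nth)
open scoped Nat.Prime

lemma eventually_mul_log_le_primeCounting' (K : ℝ) :
    ∀ᶠ n : ℕ in atTop, K * Real.log n ≤ π' n := by
  have hlog_sq : ∀ᶠ n : ℕ in atTop, (|K| + 3) * Real.log n ^ 2 ≤ Real.log 2 * n := by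
    have := ((Real.isLittleO_pow_log_id_atTop (n := 2)).comp_tendsto
      tendsto_natCast_atTop_atTop).bound (c := Real.log 2 / (|K| + 3)) (by positivity)
    filter_upwards [this] with n hn
    simp only [Function.comp_apply, id, Real.norm_eq_abs, abs_pow, sq_abs, Nat.abs_cast] at hn
    rw [div_mul_eq_mul_div, le_div_iff₀ (by positivity)] at hn
    linarith
  filter_upwards [hlog_sq, eventually_ge_atTop 3] with n hn h3
  have hL : 1 ≤ Real.log n := by
    rw [Real.le_log_iff_exp_le (by positivity)]
    have : (3 : ℝ) ≤ n := by exact_mod_cast h3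
    linarith [Real.exp_one_lt_d9]
  have hlog_succ : Real.log (n + 1) ≤ 2 * Real.log n := by
    rw [← Real.log_rpow (by positivity)]
    exact Real.log_le_log (by positivity) (by norm_cast; nlinarith)
  have hπ : (π n : ℝ) ≤ π' n + 1 := by
    rw [Nat.primeCounting_eq_primeCounting'_succ, Nat.primeCounting', Nat.count_succ]
    split_ifs <;> simp
  have hcheb := Chebyshev.pi_ge n
  rw [div_le_iff₀ (by linarith)] at hcheb
  have hπL := mul_le_mul_of_nonneg_right hπ (by linarith : 0 ≤ Real.log n)
  have hsq : (|K| + 3) * Real.log n * Real.log n ≤ (π' n + 3) * Real.log n := by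
    linarith [sq (Real.log n)]
  have hlin := le_of_mul_le_mul_right hsq (by linarith)
  have hK := mul_le_mul_of_nonneg_right (le_abs_self K) (by linarith : 0 ≤ Real.log n)
  linarith

lemma summable_mul_pow_primeCounting' {c : ℝ} (hc0 : 0 < c) (hc1 : c < 1) :
    Summable fun n : ℕ => (n : ℝ) * c ^ π' n := by
  have hlogc : Real.log c < 0 := Real.log_neg hc0 hc1
  refine (Real.summable_nat_pow_inv.mpr one_lt_two).of_norm_bounded_eventually_nat ?_
  filter_upwards [eventually_mul_log_le_primeCounting' (-3 / Real.log c),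
    eventually_gt_atTop 0] with n hn hn0
  have hn0' : (0 : ℝ) < n := by exact_mod_cast hn0
  have hexp : (n : ℝ) ^ 3 * c ^ π' n ≤ 1 := by
    rw [div_mul_eq_mul_div, div_le_iff_of_neg hlogc] at hn
    rw [← Real.exp_log hn0', ← Real.exp_log hc0, ← Real.exp_nat_mul, ← Real.exp_nat_mul,
      ← Real.exp_add, Real.exp_le_one_iff]
    push_cast
    linarith
  rw [Real.norm_of_nonneg (by positivity)]
  calc (n : ℝ) * c ^ π' n = ((n : ℝ) ^ 3 * c ^ π' n) / (n : ℝ) ^ 2 := by field_simp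
    _ ≤ ((n : ℝ) ^ 2)⁻¹ := by rw [div_eq_mul_inv]; exact mul_le_of_le_one_left (by positivity) hexp

lemma prod_primesBelow_nth_succ {M : Type*} [CommMonoid M] (r : ℕ → M) (n : ℕ) :
    ∏ p ∈ primesBelow (nth Nat.Prime (n + 1)), r p =
      (∏ p ∈ primesBelow (nth Nat.Prime n), r p) * r (nth Nat.Prime n) := by
  rw [Nat.primesBelow, Nat.filter_range_nth_eq_insert_of_infinite Nat.infinite_setOfPred_prime,
    prod_insert (by simp), mul_comm]
  rfl

noncomputable def Nat.nthPrimeEquiv : ℕ ≃ Nat.Primes where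
  toFun n := ⟨nth Nat.Prime n, Nat.prime_nth_prime n⟩
  invFun q := π' q
  left_inv := Nat.primeCounting'_nth_eq
  right_inv q := Subtype.ext (Nat.nth_count q.2)

@[simp]
lemma Nat.coe_nthPrimeEquiv (n : ℕ) : (Nat.nthPrimeEquiv n : ℕ) = nth Nat.Prime n := rfl

lemma hasSum_one_sub_mul_prod_primesBelow {r : ℕ → ℝ}
    (hr0 : ∀ p, p.Prime → 0 ≤ r p) (hr1 : ∀ p, p.Prime → r p ≤ 1)
    (hlim : Tendsto (fun n => ∏ p ∈ primesBelow (nth Nat.Prime n), r p) atTop (𝓝 0)) :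
    HasSum (fun q : Nat.Primes => (1 - r q) * ∏ p ∈ primesBelow q, r p) 1 := by
  have hpartial (N : ℕ) : ∑ n ∈ range N, (1 - r (nth Nat.Prime n)) *
      ∏ p ∈ primesBelow (nth Nat.Prime n), r p = 1 - ∏ p ∈ primesBelow (nth Nat.Prime N), r p := by
    induction N with
    | zero => simp [Nat.nth_prime_zero_eq_two, Nat.primesBelow_two]
    | succ N ih => rw [sum_range_succ, ih, prod_primesBelow_nth_succ]; ring
  rw [← Nat.nthPrimeEquiv.hasSum_iff, hasSum_iff_tendsto_nat_of_nonneg]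
  · simp only [Function.comp_apply, Nat.coe_nthPrimeEquiv, hpartial]
    simpa using tendsto_const_nhds.sub hlim
  · intro n
    exact mul_nonneg (sub_nonneg.mpr (hr1 _ (Nat.prime_nth_prime n)))
      (prod_nonneg fun p hp => hr0 p (Nat.prime_of_mem_primesBelow hp))

section WeightedPrimes

variable {r : ℕ → ℝ} {c : ℝ} (hr0 : ∀ p, p.Prime → 0 ≤ r p) (hrc : ∀ p, p.Prime → r p ≤ c)
include hr0 hrc

lemma prod_primesBelow_le_pow_primeCounting' (q : ℕ) : ∏ p ∈ primesBelow q, r p ≤ c ^ π' q := by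
  rw [← Nat.primesBelow_card_eq_primeCounting', ← prod_const]
  exact prod_le_prod (fun p hp => hr0 p (Nat.prime_of_mem_primesBelow hp))
    fun p hp => hrc p (Nat.prime_of_mem_primesBelow hp)

lemma summable_natCast_mul_one_sub_mul_prod_primesBelow (hc0 : 0 < c) (hc1 : c < 1) :
    Summable fun q : Nat.Primes => (q : ℝ) * (1 - r q) * ∏ p ∈ primesBelow q, r p := by
  have hprod_nonneg (q : ℕ) : 0 ≤ ∏ p ∈ primesBelow q, r p :=
    prod_nonneg fun p hp => hr0 p (Nat.prime_of_mem_primesBelow hp)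
  refine ((summable_mul_pow_primeCounting' hc0 hc1).subtype _).of_nonneg_of_le
    (fun q => ?_) fun q => ?_
  · exact mul_nonneg (mul_nonneg (Nat.cast_nonneg _)
      (sub_nonneg.mpr ((hrc q q.2).trans hc1.le))) (hprod_nonneg q)
  · rw [mul_assoc]
    refine mul_le_mul_of_nonneg_left ?_ (Nat.cast_nonneg _)
    calc (1 - r q) * ∏ p ∈ primesBelow q, r p
        ≤ 1 * c ^ π' q := mul_le_mul (sub_le_self _ (hr0 q q.2))
          (prod_primesBelow_le_pow_primeCounting' hr0 hrc q) (hprod_nonneg q) zero_le_one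
      _ = c ^ π' q := one_mul _

lemma hasSum_one_sub_mul_prod_primesBelow_of_le (hc1 : c < 1) :
    HasSum (fun q : Nat.Primes => (1 - r q) * ∏ p ∈ primesBelow q, r p) 1 := by
  have hc0 : 0 ≤ c := (hr0 2 Nat.prime_two).trans (hrc 2 Nat.prime_two)
  refine hasSum_one_sub_mul_prod_primesBelow hr0 (fun p hp => (hrc p hp).trans hc1.le) ?_
  refine squeeze_zero (fun n => prod_nonneg fun p hp => hr0 p (Nat.prime_of_mem_primesBelow hp))
    (fun n => ?_) (tendsto_pow_atTop_nhds_zero_of_lt_one hc0 hc1)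
  exact (prod_primesBelow_le_pow_primeCounting' hr0 hrc _).trans_eq
    (by rw [Nat.primeCounting'_nth_eq])

end WeightedPrimes

theorem stmt_15_general (c : ℝ) (hc0 : 0 < c) (hc1 : c < 1) (f : ℕ → ℝ)
    (hf0 : ∀ p : ℕ, p.Prime → 0 ≤ f p) :
    Summable (fun q : Nat.Primes =>
      (q : ℝ) * (1 - c + f q) / (1 + f q) *
        ∏ p ∈ Finset.filter Nat.Prime (Finset.range q), c / (1 + f p)) ∧
    (∑' q : Nat.Primes,
      (1 - c + f q) / (1 + f q) *
        ∏ p ∈ Finset.filter Nat.Prime (Finset.range q), c / (1 + f p)) = 1 := by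
  set r : ℕ → ℝ := fun p => c / (1 + f p)
  have hr0 (p : ℕ) (hp : p.Prime) : 0 ≤ r p := by
    have := hf0 p hp; positivity
  have hrc (p : ℕ) (hp : p.Prime) : r p ≤ c :=
    div_le_self hc0.le (le_add_of_nonneg_right (hf0 p hp))
  have hweight (q : Nat.Primes) : (1 - c + f q) / (1 + f q) = 1 - r q := by
    have := hf0 q q.2; simp only [r]; field_simp; ring
  simp only [← Nat.primesBelow_eq_filter_range, mul_div_assoc, hweight]
  exact ⟨summable_natCast_mul_one_sub_mul_prod_primesBelow hr0 hrc hc0 hc1,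
    (hasSum_one_sub_mul_prod_primesBelow_of_le hr0 hrc hc1).tsum_eq⟩

/-- Let `0 < c < 1` and `f` a function on primes with `0 ≤ f(p) ≤ 1/p`. Then
`∑_q q(1-c+f(q))/(1+f(q)) ∏_{p<q} c/(1+f(p))` converges, and the total probability
`∑_q (1-c+f(q))/(1+f(q)) ∏_{p<q} c/(1+f(p))` equals `1`. -/
theorem stmt_15 (c : ℝ) (hc0 : 0 < c) (hc1 : c < 1) (f : ℕ → ℝ)
    (hf0 : ∀ p : ℕ, p.Prime → 0 ≤ f p) (hf1 : ∀ p : ℕ, p.Prime → f p ≤ 1 / p) :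
    Summable (fun q : Nat.Primes =>
      (q : ℝ) * (1 - c + f q) / (1 + f q) *
        ∏ p ∈ Finset.filter Nat.Prime (Finset.range q), c / (1 + f p)) ∧
    (∑' q : Nat.Primes,
      (1 - c + f q) / (1 + f q) *
        ∏ p ∈ Finset.filter Nat.Prime (Finset.range q), c / (1 + f p)) = 1 :=
  stmt_15_general c hc0 hc1 f hf0
end

section
/- Let F be a real-valued function on (1, 3/2] satisfying F(σ) = ∑_{p<N} 2(log p)/p^σ ≤ 1/(σ−1) + B for all σ ∈ (1, 3/2], where N ≥ 3 and B > 0. Then log N ≤ (B + C)/A where A = sup_{λ>0} (1−2e^{−λ})/λ and C is an absolute constant; in particular N ≤ exp((B+C)/A). -/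
/-- The constant `A = sup_{λ>0} (1 - 2e^{-λ})/λ`. -/
noncomputable def constA : ℝ := sSup {x : ℝ | ∃ l : ℝ, 0 < l ∧ x = (1 - 2 * Real.exp (-l)) / l}

/-- The finset of primes `p < N` for a real bound `N`. -/
noncomputable def primesLtR (N : ℝ) : Finset ℕ :=
  (Finset.range ⌈N⌉₊).filter (fun p => Nat.Prime p ∧ (p : ℝ) < N)

/-!
Legendre's formula `log n! = ∑_{p ≤ n} v_p(n!) log p` with `v_p(n!) ≤ n / (p - 1)`, together with
`log n! ≥ n log n - n`, gives Mertens' lower bound `∑_{p ≤ n} log p / p ≥ log n - O(1)`; the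
prime-power excess `∑ log p / (p (p - 1))` is a convergent series. Partial summation against the
decreasing weights `m^(-s)` then compares `∑_{p < N} log p / p^(1+s)` with `∑_{m < N} m^(-1-s)`,
so it is at least `(1 - N^(-s)) / s - O(1)`. At `s = λ / log N` the hypothesis becomes
`(1 - 2e^(-λ)) / λ · log N ≤ B + O(1)` when `λ ≤ (log N) / 2`, while for larger `λ` the left side
is at most `2`; taking the supremum over `λ` bounds `A log N`.
-/

open Finset Real

theorem Finset.sum_mul_le_sum_mul_add_of_antitone {R : Type*} [CommRing R] [LinearOrder R]
    [IsStrictOrderedRing R] {c d f : ℕ → R} {a : R} {n : ℕ} (hf : Antitone f) (hfn : 0 ≤ f n)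
    (h : ∀ k ≤ n, ∑ i ∈ range k, d i ≤ ∑ i ∈ range k, c i + a) :
    ∑ i ∈ range n, d i * f i ≤ ∑ i ∈ range n, c i * f i + a * f 0 := by
  -- Abel summation, by induction on `k`, using that `∑ i < k, (c i - d i) + a ≥ 0`.
  have key : ∀ k ≤ n, (∑ i ∈ range k, (c i - d i) + a) * f k
      ≤ ∑ i ∈ range k, (c i - d i) * f i + a * f 0 := by
    intro k
    induction k with
    | zero => simp
    | succ k ih =>
      intro hk
      have hE : 0 ≤ ∑ i ∈ range (k + 1), (c i - d i) + a := by
        rw [sum_sub_distrib]; linarith [h (k + 1) hk]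
      calc (∑ i ∈ range (k + 1), (c i - d i) + a) * f (k + 1)
          ≤ (∑ i ∈ range (k + 1), (c i - d i) + a) * f k :=
            mul_le_mul_of_nonneg_left (hf k.le_succ) hE
        _ = (∑ i ∈ range k, (c i - d i) + a) * f k + (c k - d k) * f k := by
            rw [sum_range_succ]; ring
        _ ≤ _ := by
            rw [sum_range_succ]; linarith [ih (by omega)]
  have hE : 0 ≤ ∑ i ∈ range n, (c i - d i) + a := by
    rw [sum_sub_distrib]; linarith [h n le_rfl]
  have hsplit : ∑ i ∈ range n, (c i - d i) * f i
      = ∑ i ∈ range n, c i * f i - ∑ i ∈ range n, d i * f i := by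
    simp only [sub_mul, sum_sub_distrib]
  linarith [key n le_rfl, mul_nonneg hE hfn]

theorem mul_log_sub_le_log_factorial (n : ℕ) : n * log n - n ≤ log n.factorial := by
  rcases n.eq_zero_or_pos with rfl | hn
  · simp
  have h := pow_div_factorial_le_exp (n : ℝ) n.cast_nonneg n
  rw [div_le_iff₀ (by positivity), ← log_le_log_iff (by positivity) (by positivity), log_mul
    (by positivity) (by positivity), log_exp, log_pow] at h
  linarith

theorem log_factorial_le_mul_sum_primesLE (n : ℕ) :
    log n.factorial ≤ n * ∑ p ∈ n.primesLE, log p / (p - 1) := by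
  have hsupp : (n.factorial).factorization.support ⊆ n.primesLE := by
    intro p hp
    rw [Nat.support_factorization, Nat.mem_primeFactors] at hp
    exact Nat.mem_primesLE.mpr ⟨(hp.1.dvd_factorial).mp hp.2.1, hp.1⟩
  rw [log_nat_eq_sum_factorization, Finsupp.sum_of_support_subset _ hsupp _ (by simp), mul_sum]
  refine sum_le_sum fun p hp => ?_
  have hp := Nat.prime_of_mem_primesLE hp
  have hp1 : (1 : ℝ) < p := by exact_mod_cast hp.one_lt
  have hdiv : ((n.factorial).factorization p : ℝ) ≤ n / (p - 1) := by
    calc ((n.factorial).factorization p : ℝ) ≤ ((n / (p - 1) : ℕ) : ℝ) := by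
          exact_mod_cast Nat.factorization_factorial_le_div_pred hp n
      _ ≤ _ := by
          rw [← Nat.cast_pred hp.pos]; exact Nat.cast_div_le
  calc ((n.factorial).factorization p : ℝ) * log p ≤ n / (p - 1) * log p :=
        mul_le_mul_of_nonneg_right hdiv (log_natCast_nonneg p)
    _ = n * (log p / (p - 1)) := by ring

theorem log_div_mul_sub_one_nonneg (m : ℕ) : 0 ≤ log m / (m * (m - 1)) := by
  rcases m.eq_zero_or_pos with rfl | hm
  · simp
  have : (1 : ℝ) ≤ m := by exact_mod_cast hm
  exact div_nonneg (log_natCast_nonneg m) (mul_nonneg (by linarith) (by linarith))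

theorem summable_log_div_mul_sub_one :
    Summable fun m : ℕ => log m / (m * (m - 1)) := by
  refine ((summable_nat_rpow_inv.mpr (by norm_num : (1 : ℝ) < 3 / 2)).mul_left 4).of_nonneg_of_le
    log_div_mul_sub_one_nonneg fun m => ?_
  rcases lt_or_ge m 2 with hm | hm
  · interval_cases m <;> simp
  -- `log m ≤ 2 m^(1/2)` and `m - 1 ≥ m / 2`
  have hm2 : (2 : ℝ) ≤ m := by exact_mod_cast hm
  have hsqrt : (m : ℝ) ^ (1 / 2 : ℝ) * (m : ℝ) ^ (1 / 2 : ℝ) = m := by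
    rw [← rpow_add (by linarith)]; norm_num
  have h32 : (m : ℝ) ^ (3 / 2 : ℝ) = m * (m : ℝ) ^ (1 / 2 : ℝ) := by
    rw [show (3 / 2 : ℝ) = 1 + 1 / 2 by norm_num, rpow_add (by linarith), rpow_one]
  have hlog := log_le_rpow_div (x := m) m.cast_nonneg (by norm_num : (0 : ℝ) < 1 / 2)
  have ht : 0 < (m : ℝ) ^ (1 / 2 : ℝ) := by positivity
  rw [h32, div_le_iff₀ (by nlinarith)]
  calc log m ≤ 2 * (m : ℝ) ^ (1 / 2 : ℝ) := by linarith [hlog]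
    _ ≤ 4 * (m - 1) / (m : ℝ) ^ (1 / 2 : ℝ) := by rw [le_div_iff₀ ht]; nlinarith
    _ = _ := by field_simp

theorem sum_primesLE_log_div_sub_one_le (n : ℕ) :
    ∑ p ∈ n.primesLE, log p / (p - 1)
      ≤ ∑ p ∈ n.primesLE, log p / p + ∑' m : ℕ, log m / (m * (m - 1)) := by
  have hsplit : ∀ p ∈ n.primesLE, log p / (p - 1) = log p / p + log p / (p * (p - 1)) := by
    intro p hp
    have hp1 : (1 : ℝ) < p := by exact_mod_cast (Nat.prime_of_mem_primesLE hp).one_lt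
    have : (p : ℝ) - 1 ≠ 0 := by linarith
    field_simp
    ring
  rw [sum_congr rfl hsplit, sum_add_distrib]
  exact add_le_add le_rfl (summable_log_div_mul_sub_one.sum_le_tsum _
    fun m _ => log_div_mul_sub_one_nonneg m)

theorem exists_log_le_sum_primesLE_log_div_add :
    ∃ K, ∀ n : ℕ, log n ≤ ∑ p ∈ n.primesLE, log p / p + K := by
  set K₀ := ∑' m : ℕ, log m / (m * (m - 1))
  have hK₀ : 0 ≤ K₀ := tsum_nonneg log_div_mul_sub_one_nonneg
  refine ⟨K₀ + 1, fun n => ?_⟩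
  rcases n.eq_zero_or_pos with rfl | hn
  · simpa using (by linarith : (0 : ℝ) ≤ K₀ + 1)
  have hn' : (0 : ℝ) < n := by exact_mod_cast hn
  have h := (mul_log_sub_le_log_factorial n).trans <| (log_factorial_le_mul_sum_primesLE n).trans <|
    mul_le_mul_of_nonneg_left (sum_primesLE_log_div_sub_one_le n) hn'.le
  have : log n - 1 ≤ ∑ p ∈ n.primesLE, log p / p + K₀ := by
    rw [← mul_le_mul_iff_of_pos_left hn']; linarith
  linarith

theorem Real.rpow_neg_sub_rpow_neg_add_one_le {x s : ℝ} (hx : 0 < x) (hs : 0 ≤ s) :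
    x ^ (-s) - (x + 1) ^ (-s) ≤ s * (x⁻¹ * x ^ (-s)) := by
  have hfactor : (x + 1) ^ (-s) = x ^ (-s) * (1 + x⁻¹) ^ (-s) := by
    rw [← mul_rpow hx.le (by positivity), mul_add, mul_inv_cancel₀ hx.ne', mul_one]
  -- `(1 + t)^(-s) ≥ e^(-s t) ≥ 1 - s t` with `t = x⁻¹`
  have hbound : 1 - s * x⁻¹ ≤ (1 + x⁻¹) ^ (-s) := by
    rw [rpow_def_of_pos (by positivity)]
    have hlog : log (1 + x⁻¹) ≤ x⁻¹ := by linarith [log_le_sub_one_of_pos (by positivity : 0 < 1 + x⁻¹)]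
    calc 1 - s * x⁻¹ ≤ exp (-(s * x⁻¹)) := one_sub_le_exp_neg _
      _ ≤ exp (log (1 + x⁻¹) * -s) := exp_le_exp.mpr (by nlinarith)
  rw [hfactor]
  nlinarith [rpow_pos_of_pos hx (-s)]

theorem Nat.sum_primesLE_eq_sum_range {M : Type*} [AddCommMonoid M] (g : ℕ → M) (n : ℕ) :
    ∑ p ∈ n.primesLE, g p = ∑ i ∈ range n, if (i + 1).Prime then g (i + 1) else 0 := by
  rw [primesLE_eq_filter_range, sum_filter, sum_range_succ']
  simp [Nat.not_prime_zero]

theorem exists_sub_le_sum_primesLE_log_div_rpow :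
    ∃ C, 0 ≤ C ∧ ∀ (n : ℕ) (s : ℝ), 0 < s →
      (1 - ((n + 1 : ℕ) : ℝ) ^ (-s)) / s - C ≤ ∑ p ∈ n.primesLE, log p / (p : ℝ) ^ (1 + s) := by
  obtain ⟨K, hK⟩ := exists_log_le_sum_primesLE_log_div_add
  have hK0 : 0 ≤ K := by simpa using hK 0
  refine ⟨K + 1, by linarith, fun n s hs => ?_⟩
  set f : ℕ → ℝ := fun i => ((i + 1 : ℕ) : ℝ) ^ (-s) with hf_def
  have hf0 : f 0 = 1 := by simp [hf_def]
  have hf : Antitone f := fun i j hij =>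
    rpow_le_rpow_of_nonpos (by positivity) (by exact_mod_cast Nat.succ_le_succ hij) (by linarith)
  -- compare the primes, weighted by `log p / p`, with the integers, weighted by `1 / m`
  have hcmp := sum_mul_le_sum_mul_add_of_antitone (n := n) (a := K + 1) hf (by positivity)
    (c := fun i => if (i + 1).Prime then log ((i + 1 : ℕ) : ℝ) / ((i + 1 : ℕ) : ℝ) else 0)
    (d := fun i => ((i + 1 : ℕ) : ℝ)⁻¹) fun k _ => by
      have hH : ∑ i ∈ range k, ((i + 1 : ℕ) : ℝ)⁻¹ = harmonic k := by simp [harmonic]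
      rw [hH, ← Nat.sum_primesLE_eq_sum_range (fun p => log p / p)]
      linarith [harmonic_le_one_add_log k, hK k]
  have hprimes : ∑ i ∈ range n, (if (i + 1).Prime then log ((i + 1 : ℕ) : ℝ) / ((i + 1 : ℕ) : ℝ)
      else 0) * f i = ∑ p ∈ n.primesLE, log p / (p : ℝ) ^ (1 + s) := by
    rw [Nat.sum_primesLE_eq_sum_range (fun p => log p / (p : ℝ) ^ (1 + s))]
    refine sum_congr rfl fun i _ => ?_
    split_ifs
    · rw [hf_def]
      beta_reduce
      rw [rpow_add (by positivity), rpow_one, rpow_neg (by positivity)]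
      ring
    · simp
  have htel : (1 - ((n + 1 : ℕ) : ℝ) ^ (-s)) / s ≤ ∑ i ∈ range n, ((i + 1 : ℕ) : ℝ)⁻¹ * f i := by
    rw [div_le_iff₀ hs, ← hf0, ← sum_range_sub', sum_mul]
    refine sum_le_sum fun i _ => ?_
    have := rpow_neg_sub_rpow_neg_add_one_le (x := ((i + 1 : ℕ) : ℝ)) (by positivity) hs.le
    rw [hf_def]; push_cast at this ⊢; linarith
  rw [hf0, mul_one, hprimes] at hcmp
  linarith

theorem primesLtR_eq_primesBelow (N : ℝ) : primesLtR N = Nat.primesBelow ⌈N⌉₊ := by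
  refine filter_congr fun p hp => ?_
  simp [Nat.lt_ceil.mp (mem_range.mp hp)]

theorem exists_sub_le_sum_primesLtR_log_div_rpow :
    ∃ C, 0 ≤ C ∧ ∀ N : ℝ, 0 < N → ∀ s : ℝ, 0 < s →
      (1 - N ^ (-s)) / s - C ≤ ∑ p ∈ primesLtR N, log p / (p : ℝ) ^ (1 + s) := by
  obtain ⟨C, hC0, hC⟩ := exists_sub_le_sum_primesLE_log_div_rpow
  refine ⟨C, hC0, fun N hN s hs => ?_⟩
  obtain ⟨m, hm⟩ : ∃ m, ⌈N⌉₊ = m + 1 := Nat.exists_eq_add_one.mpr (Nat.ceil_pos.mpr hN)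
  have hNm : N ≤ ((m + 1 : ℕ) : ℝ) := hm ▸ Nat.le_ceil N
  rw [primesLtR_eq_primesBelow, hm]
  refine le_trans ?_ (hC m s hs)
  have := rpow_le_rpow_of_nonpos hN hNm (by linarith : -s ≤ 0)
  exact sub_le_sub_right (div_le_div_of_nonneg_right (by linarith) hs.le) C

theorem constA_pos : 0 < constA := by
  have hbdd : BddAbove {x : ℝ | ∃ l : ℝ, 0 < l ∧ x = (1 - 2 * exp (-l)) / l} := by
    refine ⟨2, ?_⟩
    rintro x ⟨l, hl, rfl⟩
    rw [div_le_iff₀ hl]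
    linarith [one_sub_le_exp_neg l]
  have he : 2 * exp (-1) < 1 := by
    rw [exp_neg, ← div_eq_mul_inv, div_lt_one (exp_pos 1)]
    linarith [add_one_lt_exp one_ne_zero]
  exact (by linarith : (0 : ℝ) < (1 - 2 * exp (-1)) / 1).trans_le <|
    le_csSup hbdd ⟨1, one_pos, rfl⟩

theorem constA_le {M : ℝ} (h : ∀ l : ℝ, 0 < l → (1 - 2 * exp (-l)) / l ≤ M) : constA ≤ M :=
  csSup_le ⟨_, 1, one_pos, rfl⟩ fun _ ⟨l, hl, hx⟩ => hx ▸ h l hl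

theorem div_le_of_sum_primesLtR_le {N B C l : ℝ} (hN : 1 < N) (hB : 0 < B) (hC0 : 0 ≤ C)
    (hC : ∀ s : ℝ, 0 < s → (1 - N ^ (-s)) / s - C ≤ ∑ p ∈ primesLtR N, log p / (p : ℝ) ^ (1 + s))
    (h : ∀ σ : ℝ, 1 < σ → σ ≤ 3 / 2 →
        (∑ p ∈ primesLtR N, 2 * log p / (p : ℝ) ^ σ) ≤ 1 / (σ - 1) + B)
    (hl : 0 < l) : (1 - 2 * exp (-l)) / l ≤ (B + (2 * C + 2)) / log N := by
  have hL : 0 < log N := log_pos hN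
  rw [div_le_div_iff₀ hl hL]
  rcases le_or_gt l (log N / 2) with hsmall | hlarge
  · set s := l / log N with hs_def
    have hs : 0 < s := div_pos hl hL
    have hNs : N ^ (-s) = exp (-l) := by
      rw [rpow_def_of_pos (by linarith), hs_def]; field_simp
    have hs_half : s ≤ 1 / 2 := by rw [hs_def, div_le_iff₀ hL]; linarith
    have hupper := h (1 + s) (by linarith) (by linarith)
    rw [show 1 + s - 1 = s by ring] at hupper
    have hsum : ∑ p ∈ primesLtR N, 2 * log p / (p : ℝ) ^ (1 + s)
        = 2 * ∑ p ∈ primesLtR N, log p / (p : ℝ) ^ (1 + s) := by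
      rw [mul_sum]; simp_rw [mul_div_assoc]
    have hlower := hC s hs
    rw [hNs] at hlower
    have key : (1 - 2 * exp (-l)) / s ≤ B + 2 * C := by
      have : (1 - 2 * exp (-l)) / s = 2 * ((1 - exp (-l)) / s) - 1 / s := by ring
      linarith
    rw [hs_def, div_div_eq_mul_div, div_le_iff₀ hl] at key
    nlinarith
  · nlinarith [exp_pos (-l)]

/-- If `∑_{p<N} 2(log p)/p^σ ≤ 1/(σ-1) + B` for all `σ ∈ (1, 3/2]`, then
`log N ≤ (B + C)/A` for an absolute constant `C`, where
`A = sup_{λ>0}(1-2e^{-λ})/λ`; in particular `N ≤ exp((B+C)/A)`. -/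
theorem stmt_18 :
    ∃ C : ℝ, ∀ (N B : ℝ), 3 ≤ N → 0 < B →
      (∀ σ : ℝ, 1 < σ → σ ≤ 3 / 2 →
        (∑ p ∈ primesLtR N, 2 * Real.log p / (p : ℝ) ^ σ) ≤ 1 / (σ - 1) + B) →
      Real.log N ≤ (B + C) / constA ∧ N ≤ Real.exp ((B + C) / constA) := by
  obtain ⟨C, hC0, hC⟩ := exists_sub_le_sum_primesLtR_log_div_rpow
  refine ⟨2 * C + 2, fun N B hN hB h => ?_⟩
  have hN0 : 0 < N := by linarith
  have hA : constA ≤ (B + (2 * C + 2)) / log N :=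
    constA_le fun l hl => div_le_of_sum_primesLtR_le (by linarith) hB hC0 (hC N hN0) h hl
  have hlog : log N ≤ (B + (2 * C + 2)) / constA := by
    rw [le_div_iff₀ constA_pos, mul_comm]
    exact (le_div_iff₀ (log_pos (by linarith))).mp hA
  exact ⟨hlog, (log_le_iff_le_exp hN0).mp hlog⟩
end
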